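/- For 6 ≤ n ≤ k, the δ-chromatic number of the grid P_n □ P_k equals ⌈(n-2)(k-2)/2⌉. -/

import Mathlib

open scoped Classical
open SimpleGraph

/-- The δ-complement of a graph: `u v` are adjacent iff they are distinct and
either they have equal degrees and are non-adjacent in `G`, or they have
different degrees and are adjacent in `G`. -/
def deltaComp {V : Type*} [Fintype V] (G : SimpleGraph V) : SimpleGraph V where
  Adj u v := u ≠ v ∧ ((G.degree u = G.degree v ∧ ¬ G.Adj u v) ∨
    (G.degree u ≠ G.degree v ∧ G.Adj u v))
  symm := by
    constructor
    intro u v h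
    refine ⟨h.1.symm, ?_⟩
    rcases h.2 with ⟨hd, ha⟩ | ⟨hd, ha⟩
    · exact Or.inl ⟨hd.symm, fun hh => ha hh.symm⟩
    · exact Or.inr ⟨fun hh => hd hh.symm, ha.symm⟩
  loopless := ⟨fun v h => h.1 rfl⟩

/-- The δ-chromatic number: chromatic number of the δ-complement. -/
noncomputable def deltaChrom {V : Type*} [Fintype V] (G : SimpleGraph V) : ℕ∞ :=
  (deltaComp G).chromaticNumber

/-
On the degree-4 vertices the δ-complement of the grid is the complement of the inner
`(n-2) × (k-2)` grid, so the black cells of the inner checkerboard form a clique of size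
`⌈(n-2)(k-2)/2⌉`. Conversely, a colour class of the δ-complement is any set in which vertices of
equal degree are pairwise adjacent in the grid and vertices of different degrees are not. Tile the
inner grid by dominoes, each containing exactly one black cell, and attach to every domino at most
one boundary edge and at most one corner, all far from it: this colours the δ-complement with one
colour per black cell.
-/

open Finset

section DeltaComplement

variable {V : Type*} [Fintype V] {G : SimpleGraph V}

theorem isClique_deltaComp_of_isIndepSet {s : Set V}
    (hdeg : s.Pairwise fun u v => G.degree u = G.degree v)
    (hind : G.IsIndepSet s) : (deltaComp G).IsClique s :=
  fun _ hu _ hv huv => ⟨huv, Or.inl ⟨hdeg hu hv huv, hind hu hv huv⟩⟩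

def deltaCompColoring {α : Type*} (f : V → α)
    (hf : ∀ ⦃u v⦄, u ≠ v → f u = f v → (G.degree u = G.degree v ↔ G.Adj u v)) :
    (deltaComp G).Coloring α :=
  Coloring.mk f fun {_ _} ⟨huv, h⟩ hfuv => by
    rcases h with ⟨hdeg, hnadj⟩ | ⟨hdeg, hadj⟩
    · exact hnadj ((hf huv hfuv).1 hdeg)
    · exact hdeg ((hf huv hfuv).2 hadj)

theorem deltaChrom_eq_card (s : Finset V)
    (hdeg : (s : Set V).Pairwise fun u v => G.degree u = G.degree v) (hind : G.IsIndepSet s)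
    (f : V → s) (hf : ∀ ⦃u v⦄, u ≠ v → f u = f v → (G.degree u = G.degree v ↔ G.Adj u v)) :
    deltaChrom G = #s :=
  le_antisymm ((deltaCompColoring f hf).colorable.chromaticNumber_le.trans_eq (by simp))
    (isClique_deltaComp_of_isIndepSet hdeg hind).card_le_chromaticNumber

end DeltaComplement

theorem card_filter_range_add_mod_two_eq_zero (a b : ℕ) :
    #{j ∈ range b | (a + j) % 2 = 0} = (b + 1 - a % 2) / 2 := by
  induction b with
  | zero => simp only [range_zero, filter_empty, card_empty]; omega
  | succ b ih =>
    rw [range_add_one, filter_insert]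
    split_ifs
    · rw [card_insert_of_notMem (by simp), ih]; omega
    · rw [ih]; omega

theorem card_filter_range_product_add_mod_two_eq_zero (a b : ℕ) :
    #{p ∈ range a ×ˢ range b | (p.1 + p.2) % 2 = 0} = (a * b + 1) / 2 := by
  rw [card_filter, sum_product]
  simp_rw [← card_filter, card_filter_range_add_mod_two_eq_zero]
  induction a with
  | zero => simp
  | succ a ih =>
    rw [sum_range_succ, ih, add_mul, one_mul]
    have hab := Nat.mul_mod a b 2
    rcases Nat.mod_two_eq_zero_or_one a with ha | ha <;>
      rcases Nat.mod_two_eq_zero_or_one b with hb | hb <;>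
      simp only [ha, hb] at hab <;> omega

def pathDegree (n i : ℕ) : ℕ := if i = 0 ∨ i = n - 1 then 1 else 2

theorem pathDegree_cases {n i : ℕ} (hi : i < n) :
    pathDegree n i = 1 ∧ (i = 0 ∨ i + 1 = n) ∨ pathDegree n i = 2 ∧ 1 ≤ i ∧ i + 2 ≤ n := by
  unfold pathDegree
  split_ifs <;> omega

theorem pathGraph_degree {n : ℕ} (hn : 2 ≤ n) (v : Fin n)
    [Fintype ((pathGraph n).neighborSet v)] : (pathGraph n).degree v = pathDegree n v := by
  rw [← card_neighborFinset_eq_degree, pathDegree]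
  have hv := v.isLt
  split_ifs
  · refine card_eq_one.2 ⟨if (v : ℕ) = 0 then ⟨1, by omega⟩ else ⟨n - 2, by omega⟩, ?_⟩
    ext u
    split_ifs <;> simp only [mem_neighborFinset, pathGraph_adj, mem_singleton, Fin.ext_iff] <;>
      omega
  · refine card_eq_two.2 ⟨⟨v - 1, by omega⟩, ⟨v + 1, by omega⟩, by simp [Fin.ext_iff], ?_⟩
    ext u
    simp only [mem_neighborFinset, pathGraph_adj, mem_insert, mem_singleton, Fin.ext_iff]
    omega

theorem boxProd_pathGraph_degree {n k : ℕ} (hn : 2 ≤ n) (hk : 2 ≤ k) (v : Fin n × Fin k)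
    [Fintype ((pathGraph n □ pathGraph k).neighborSet v)] :
    (pathGraph n □ pathGraph k).degree v = pathDegree n v.1 + pathDegree k v.2 := by
  rw [degree_boxProd, pathGraph_degree hn, pathGraph_degree hk]

theorem boxProd_pathGraph_adj {n k : ℕ} {u v : Fin n × Fin k} :
    (pathGraph n □ pathGraph k).Adj u v ↔
      ((u.1 : ℕ) + 1 = v.1 ∨ (v.1 : ℕ) + 1 = u.1) ∧ (u.2 : ℕ) = v.2 ∨
        ((u.2 : ℕ) + 1 = v.2 ∨ (v.2 : ℕ) + 1 = u.2) ∧ (u.1 : ℕ) = v.1 := by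
  simp only [boxProd_adj, pathGraph_adj, Fin.ext_iff]

def gridCheckerboard (n k : ℕ) : Finset (Fin n × Fin k) :=
  {v | 1 ≤ (v.1 : ℕ) ∧ (v.1 : ℕ) ≤ n - 2 ∧ 1 ≤ (v.2 : ℕ) ∧ (v.2 : ℕ) ≤ k - 2 ∧
    ((v.1 : ℕ) + v.2) % 2 = 0}

theorem card_gridCheckerboard (n k : ℕ) :
    #(gridCheckerboard n k) = ((n - 2) * (k - 2) + 1) / 2 := by
  rw [← card_filter_range_product_add_mod_two_eq_zero]
  refine card_nbij (fun v => ((v.1 : ℕ) - 1, (v.2 : ℕ) - 1)) ?_ ?_ ?_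
  · intro v hv
    simp only [gridCheckerboard, mem_coe, mem_filter, mem_univ, true_and, mem_product,
      mem_range] at hv ⊢
    omega
  · intro v hv w hw h
    simp only [gridCheckerboard, mem_coe, mem_filter, mem_univ, true_and] at hv hw
    simp only [Prod.ext_iff, Fin.ext_iff] at h ⊢
    omega
  · rintro ⟨i, j⟩ h
    simp only [mem_coe, mem_filter, mem_product, mem_range] at h
    refine ⟨(⟨i + 1, by omega⟩, ⟨j + 1, by omega⟩), ?_, by simp⟩
    simp only [gridCheckerboard, mem_coe, mem_filter, mem_univ, true_and]
    omega

theorem isIndepSet_gridCheckerboard (n k : ℕ) :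
    (pathGraph n □ pathGraph k).IsIndepSet (gridCheckerboard n k) := by
  intro u hu v hv _ hadj
  simp only [gridCheckerboard, mem_coe, mem_filter, mem_univ, true_and] at hu hv
  rw [boxProd_pathGraph_adj] at hadj
  omega

theorem pathDegree_add_pathDegree_of_mem_gridCheckerboard {n k : ℕ} {v : Fin n × Fin k}
    (hv : v ∈ gridCheckerboard n k) : pathDegree n v.1 + pathDegree k v.2 = 4 := by
  simp only [gridCheckerboard, mem_filter, mem_univ, true_and] at hv
  simp only [pathDegree]
  split_ifs <;> omega

/-- The black cell of the domino containing the inner cell `x`. Inner rows are tiled by horizontal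
dominoes on the columns `2m+1, 2m+2`, and when `b` is odd the last column by vertical dominoes on
the rows `2m+1, 2m+2`; a cell left over at the end of that column is black. -/
def dominoRep (b : ℕ) (x : ℕ × ℕ) : ℕ × ℕ :=
  if x.2 ≤ 2 * (b / 2) then (x.1, 2 * ((x.2 - 1) / 2) + 2 - x.1 % 2)
  else (2 * ((x.1 - 1) / 2) + 1, x.2)

theorem dominoRep_mem {b : ℕ} {x : ℕ × ℕ} (h1 : 1 ≤ x.1) (h2 : 1 ≤ x.2) (h2b : x.2 ≤ b) :
    1 ≤ (dominoRep b x).1 ∧ (dominoRep b x).1 ≤ x.1 ∧ 1 ≤ (dominoRep b x).2 ∧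
      (dominoRep b x).2 ≤ b ∧ ((dominoRep b x).1 + (dominoRep b x).2) % 2 = 0 := by
  unfold dominoRep
  split_ifs <;> omega

theorem dominoRep_eq_dominoRep {b : ℕ} {x y : ℕ × ℕ} (hx1 : 1 ≤ x.1) (hy1 : 1 ≤ y.1)
    (hx2 : 1 ≤ x.2) (hy2 : 1 ≤ y.2) (hx2b : x.2 ≤ b) (hy2b : y.2 ≤ b)
    (h : dominoRep b x = dominoRep b y) :
    x.1 = y.1 ∧ x.2 ≤ 2 * (b / 2) ∧ y.2 ≤ 2 * (b / 2) ∧ (x.2 + 1) / 2 = (y.2 + 1) / 2 ∨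
      x.2 = y.2 ∧ 2 * (b / 2) < x.2 ∧ (x.1 + 1) / 2 = (y.1 + 1) / 2 := by
  unfold dominoRep at h
  split_ifs at h <;> simp only [Prod.mk.injEq] at h <;> omega

/-- The inner cell whose domino absorbs the vertex `(i, j)`: the top row goes to row 3, the bottom
row to row 1, the side columns to the far ends of the even rows (and of row `n - 2`), and the
corners to dominoes of rows 1 and 3 away from their neighbours. -/
def gridAnchor (n k i j : ℕ) : ℕ × ℕ :=
  if i = 0 then (if j = 0 then (1, 1) else if j = k - 1 then (1, 3) else (3, j))
  else if i = n - 1 then (if j = 0 then (3, 1) else if j = k - 1 then (3, 3) else (1, j))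
  else if j = 0 then (min (2 * ((i + 1) / 2)) (n - 2), k - 3)
  else if j = k - 1 then (min (2 * ((i + 1) / 2)) (n - 2), 1)
  else (i, j)

theorem gridAnchor_mem {n k i j : ℕ} (hn : 6 ≤ n) (hk : 6 ≤ k) (hi : i < n) (hj : j < k) :
    1 ≤ (gridAnchor n k i j).1 ∧ (gridAnchor n k i j).1 ≤ n - 2 ∧
      1 ≤ (gridAnchor n k i j).2 ∧ (gridAnchor n k i j).2 ≤ k - 2 := by
  unfold gridAnchor
  split_ifs <;> omega

def gridColor (n k i j : ℕ) : ℕ × ℕ := dominoRep (k - 2) (gridAnchor n k i j)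

theorem gridColor_mem {n k i j : ℕ} (hn : 6 ≤ n) (hk : 6 ≤ k) (hi : i < n) (hj : j < k) :
    1 ≤ (gridColor n k i j).1 ∧ (gridColor n k i j).1 ≤ n - 2 ∧ 1 ≤ (gridColor n k i j).2 ∧
      (gridColor n k i j).2 ≤ k - 2 ∧ ((gridColor n k i j).1 + (gridColor n k i j).2) % 2 = 0 := by
  have := gridAnchor_mem hn hk hi hj
  have := dominoRep_mem (b := k - 2) this.1 this.2.2.1 this.2.2.2
  unfold gridColor
  omega

set_option maxHeartbeats 800000 in
theorem degree_eq_iff_adj_of_gridColor_eq {n k i j p q : ℕ} (hn : 6 ≤ n) (hk : 6 ≤ k)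
    (hi : i < n) (hj : j < k) (hp : p < n) (hq : q < k) (hne : (i, j) ≠ (p, q))
    (h : gridColor n k i j = gridColor n k p q) :
    pathDegree n i + pathDegree k j = pathDegree n p + pathDegree k q ↔
      (i + 1 = p ∨ p + 1 = i) ∧ j = q ∨ (j + 1 = q ∨ q + 1 = j) ∧ i = p := by
  have hij := gridAnchor_mem hn hk hi hj
  have hpq := gridAnchor_mem hn hk hp hq
  have hdomino := dominoRep_eq_dominoRep hij.1 hpq.1 hij.2.2.1 hpq.2.2.1 hij.2.2.2 hpq.2.2.2 h
  have := pathDegree_cases hi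
  have := pathDegree_cases hj
  have := pathDegree_cases hp
  have := pathDegree_cases hq
  simp only [ne_eq, Prod.mk.injEq] at hne
  clear h hij hpq
  unfold gridAnchor at hdomino
  split_ifs at hdomino <;> omega

def gridColoring {n k : ℕ} (hn : 6 ≤ n) (hk : 6 ≤ k) (v : Fin n × Fin k) :
    gridCheckerboard n k :=
  have h := gridColor_mem hn hk v.1.isLt v.2.isLt
  ⟨(⟨(gridColor n k v.1 v.2).1, by omega⟩, ⟨(gridColor n k v.1 v.2).2, by omega⟩), by
    simp only [gridCheckerboard, mem_filter, mem_univ, true_and]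
    omega⟩

theorem degree_eq_iff_adj_of_gridColoring_eq {n k : ℕ} (hn : 6 ≤ n) (hk : 6 ≤ k)
    {u v : Fin n × Fin k} (huv : u ≠ v) (h : gridColoring hn hk u = gridColoring hn hk v) :
    pathDegree n u.1 + pathDegree k u.2 = pathDegree n v.1 + pathDegree k v.2 ↔
      (pathGraph n □ pathGraph k).Adj u v := by
  rw [boxProd_pathGraph_adj]
  refine degree_eq_iff_adj_of_gridColor_eq hn hk u.1.isLt u.2.isLt v.1.isLt v.2.isLt ?_ ?_
  · simpa [Prod.ext_iff, Fin.ext_iff] using huv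
  · simpa [gridColoring, Prod.ext_iff, Fin.ext_iff] using h

/-- For `6 ≤ n ≤ k`, `χ_δ(P_n □ P_k) = ⌈(n-2)(k-2)/2⌉`. -/
theorem deltaChrom_path_boxProd_path (n k : ℕ) (hn : 6 ≤ n) (hnk : n ≤ k) :
    deltaChrom (pathGraph n □ pathGraph k) = ((((n - 2) * (k - 2) + 1) / 2 : ℕ) : ℕ∞) := by
  have hk : 6 ≤ k := hn.trans hnk
  rw [← card_gridCheckerboard, deltaChrom_eq_card _ ?_ (isIndepSet_gridCheckerboard n k)
    (gridColoring hn hk) ?_]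
  all_goals simp only [boxProd_pathGraph_degree (by omega : 2 ≤ n) (by omega : 2 ≤ k)]
  · intro u hu v hv _
    rw [pathDegree_add_pathDegree_of_mem_gridCheckerboard hu,
      pathDegree_add_pathDegree_of_mem_gridCheckerboard hv]
  · exact fun u v => degree_eq_iff_adj_of_gridColoring_eq hn hk
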